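/- arXiv:2402.15017 — 2 statements merged into one kernel-verified Lean document; each statement's English description precedes it below -/
import Mathlib

section
/- Lemma B.1 (contrastive pretraining loss controls the task-averaged supervised loss, discrete form): For every representation φ : X → ℝ^d, Σ over ordered pairs (y₁,y₂) with y₁ ≠ y₂ of η(y₁)η(y₂)·L_sup(y₁,y₂,φ) ≤ L_con(φ) − τ·log 2. Equivalently, when τ < 1: L_sup(φ) ≤ (1/(1−τ))·( L_con(φ) − τ·log 2 ). -/
open scoped BigOperators

/-- Logistic loss `ℓ(v) = log(1 + exp(-v))`. -/
noncomputable def ell (v : ℝ) : ℝ := Real.log (1 + Real.exp (-v))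

/-- Standard inner product on `ℝ^d`. -/
noncomputable def dot {d : ℕ} (v w : Fin d → ℝ) : ℝ := ∑ i, v i * w i

/-- Population contrastive pretraining loss. -/
noncomputable def Lcon {Y X : Type*} [Fintype Y] [Fintype X] {d : ℕ}
    (η : Y → ℝ) (D : Y → X → ℝ) (φ : X → Fin d → ℝ) : ℝ :=
  ∑ y, ∑ yneg, η y * η yneg *
    ∑ x, ∑ xpos, ∑ xneg,
      D y x * D y xpos * D yneg xneg *
        ell (dot (φ x) (fun i => φ xpos i - φ xneg i))

/-- Binary supervised task loss for the task with classes `y₁, y₂`. -/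
noncomputable def Lsup {Y X : Type*} [Fintype X] {d : ℕ}
    (D : Y → X → ℝ) (y₁ y₂ : Y) (φ : X → Fin d → ℝ) : ℝ :=
  ⨅ w : Fin d → ℝ,
    (1 / 2) * ((∑ x, D y₁ x * ell (dot w (φ x))) +
      ∑ x, D y₂ x * ell (-(dot w (φ x))))

/-- Collision probability `τ = Σ_y η(y)²`. -/
noncomputable def tau {Y : Type*} [Fintype Y] (η : Y → ℝ) : ℝ := ∑ y, (η y) ^ 2

/-- Task-averaged supervised loss (for `τ < 1`). -/
noncomputable def LsupAvg {Y X : Type*} [Fintype Y] [Fintype X] [DecidableEq Y] {d : ℕ}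
    (η : Y → ℝ) (D : Y → X → ℝ) (φ : X → Fin d → ℝ) : ℝ :=
  (1 / (1 - tau η)) *
    ∑ y₁, ∑ y₂, if y₁ ≠ y₂ then η y₁ * η y₂ * Lsup D y₁ y₂ φ else 0

lemma ell_nonneg (v : ℝ) : 0 ≤ ell v :=
  Real.log_nonneg (by nlinarith [Real.exp_pos (-v)])

lemma ell_zero : ell 0 = Real.log 2 := by norm_num [ell]

lemma ell_convexOn : ConvexOn ℝ Set.univ ell := by
  refine ⟨convex_univ, ?_⟩
  intro a _ b _ s t hs ht hst
  simp only [smul_eq_mul]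
  set x := Real.exp (-a) with hx
  set y := Real.exp (-b) with hy
  have hx0 : 0 < x := Real.exp_pos _
  have hy0 : 0 < y := Real.exp_pos _
  have hA : (0:ℝ) < 1 + x := by linarith
  have hB : (0:ℝ) < 1 + y := by linarith
  have hAB : (0:ℝ) < (1+x)^s * (1+y)^t := by positivity
  have hexp : Real.exp (-(s*a + t*b)) = x^s * y^t := by
    rw [hx, hy, ← Real.exp_mul, ← Real.exp_mul, ← Real.exp_add]; ring_nf
  have h1 : (1/(1+x))^s * (1/(1+y))^t ≤ s*(1/(1+x)) + t*(1/(1+y)) :=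
    Real.geom_mean_le_arith_mean2_weighted hs ht (by positivity) (by positivity) hst
  have h2 : (x/(1+x))^s * (y/(1+y))^t ≤ s*(x/(1+x)) + t*(y/(1+y)) :=
    Real.geom_mean_le_arith_mean2_weighted hs ht (by positivity) (by positivity) hst
  have e1 : (1/(1+x))^s * (1/(1+y))^t = 1/((1+x)^s * (1+y)^t) := by
    rw [Real.div_rpow zero_le_one hA.le, Real.div_rpow zero_le_one hB.le,
      Real.one_rpow, Real.one_rpow]
    rw [div_mul_div_comm, one_mul]
  have e2 : (x/(1+x))^s * (y/(1+y))^t = (x^s * y^t)/((1+x)^s * (1+y)^t) := by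
    rw [Real.div_rpow hx0.le hA.le, Real.div_rpow hy0.le hB.le, div_mul_div_comm]
  have hrhs : s*(1/(1+x)) + t*(1/(1+y)) + (s*(x/(1+x)) + t*(y/(1+y))) = s + t := by
    field_simp; ring
  have hsum : (1 + x^s*y^t)/((1+x)^s*(1+y)^t) ≤ 1 := by
    have h3 := add_le_add h1 h2
    rw [e1, e2, ← add_div, hrhs, hst] at h3
    exact h3
  have hkey : 1 + Real.exp (-(s*a + t*b)) ≤ (1+x)^s * (1+y)^t := by
    rw [hexp]; exact (div_le_one hAB).mp hsum
  have : ell (s*a + t*b) ≤ Real.log ((1+x)^s * (1+y)^t) := by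
    apply Real.log_le_log (by positivity) hkey
  refine this.trans_eq ?_
  rw [Real.log_mul (by positivity) (by positivity), Real.log_rpow hA, Real.log_rpow hB]
  rfl


lemma dot_comm {d : ℕ} (v w : Fin d → ℝ) : dot v w = dot w v := by
  simp [dot, mul_comm]

lemma dot_sub {d : ℕ} (v f g : Fin d → ℝ) :
    dot v (fun i => f i - g i) = dot v f - dot v g := by
  simp [dot, mul_sub, Finset.sum_sub_distrib]

noncomputable def mu {Y X : Type*} [Fintype X] {d : ℕ}
    (D : Y → X → ℝ) (φ : X → Fin d → ℝ) (y : Y) : Fin d → ℝ :=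
  fun i => ∑ x, D y x * φ x i

lemma dot_mu {Y X : Type*} [Fintype X] {d : ℕ}
    (D : Y → X → ℝ) (φ : X → Fin d → ℝ) (y : Y) (v : Fin d → ℝ) :
    dot v (mu D φ y) = ∑ z, D y z * dot v (φ z) := by
  simp only [dot, mu, Finset.mul_sum]
  rw [Finset.sum_comm]
  apply Finset.sum_congr rfl
  intro z _
  apply Finset.sum_congr rfl
  intro i _
  ring

lemma jensen_key {Y X : Type*} [Fintype X] {d : ℕ} (D : Y → X → ℝ)
    (hD0 : ∀ y x, 0 ≤ D y x) (hD1 : ∀ y, ∑ x, D y x = 1)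
    (φ : X → Fin d → ℝ) (y₁ y₂ : Y) (v : Fin d → ℝ) :
    ell (dot v (fun i => mu D φ y₁ i - mu D φ y₂ i)) ≤
      ∑ xp, ∑ xn, D y₁ xp * D y₂ xn * ell (dot v (fun i => φ xp i - φ xn i)) := by
  have hsw : ∑ p : X × X, D y₁ p.1 * D y₂ p.2 = 1 := by
    rw [Fintype.sum_prod_type]
    simp only [← Finset.mul_sum, hD1, mul_one]
  have hz : ∑ p : X × X, (D y₁ p.1 * D y₂ p.2) •
        dot v (fun i => φ p.1 i - φ p.2 i)
      = dot v (fun i => mu D φ y₁ i - mu D φ y₂ i) := by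
    have hd : ∀ p : X × X, dot v (fun i => φ p.1 i - φ p.2 i)
        = dot v (φ p.1) - dot v (φ p.2) := fun p => dot_sub v (φ p.1) (φ p.2)
    simp only [smul_eq_mul, hd, mul_sub]
    rw [Finset.sum_sub_distrib, dot_sub, dot_mu, dot_mu, Fintype.sum_prod_type,
      Fintype.sum_prod_type]
    congr 1
    · calc ∑ xp, ∑ xn, D y₁ xp * D y₂ xn * dot v (φ xp)
          = ∑ xp, (D y₁ xp * dot v (φ xp)) * ∑ xn, D y₂ xn := by
            apply Finset.sum_congr rfl; intro xp _
            rw [Finset.mul_sum]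
            apply Finset.sum_congr rfl; intro xn _; ring
        _ = ∑ z, D y₁ z * dot v (φ z) := by simp [hD1 y₂]
    · calc ∑ xp, ∑ xn, D y₁ xp * D y₂ xn * dot v (φ xn)
          = ∑ xp, D y₁ xp * ∑ xn, D y₂ xn * dot v (φ xn) := by
            apply Finset.sum_congr rfl; intro xp _
            rw [Finset.mul_sum]
            apply Finset.sum_congr rfl; intro xn _; ring
        _ = ∑ z, D y₂ z * dot v (φ z) := by
            rw [← Finset.sum_mul, hD1 y₁, one_mul]
  have h := ell_convexOn.map_sum_le (t := Finset.univ)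
    (w := fun p : X × X => D y₁ p.1 * D y₂ p.2)
    (p := fun p : X × X => dot v (fun i => φ p.1 i - φ p.2 i))
    (fun p _ => mul_nonneg (hD0 _ _) (hD0 _ _)) hsw (fun p _ => Set.mem_univ _)
  rw [hz] at h
  refine h.trans_eq ?_
  rw [Fintype.sum_prod_type]
  simp [smul_eq_mul]


/-- Lemma B.1: the contrastive pretraining loss controls the task-averaged
supervised loss (discrete form). -/
theorem contrastive_loss_controls_supervised_loss
    {Y X : Type*} [Fintype Y] [Fintype X] [DecidableEq Y] [Nonempty X]
    (hY : 2 ≤ Fintype.card Y)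
    (η : Y → ℝ) (hη0 : ∀ y, 0 ≤ η y) (hη1 : ∑ y, η y = 1)
    (D : Y → X → ℝ) (hD0 : ∀ y x, 0 ≤ D y x) (hD1 : ∀ y, ∑ x, D y x = 1)
    {d : ℕ} (hd : 1 ≤ d)
    (φ : X → Fin d → ℝ) :
    (∑ y₁, ∑ y₂, if y₁ ≠ y₂ then η y₁ * η y₂ * Lsup D y₁ y₂ φ else 0) ≤
        Lcon η D φ - tau η * Real.log 2 ∧
      (tau η < 1 →
        LsupAvg η D φ ≤ (1 / (1 - tau η)) * (Lcon η D φ - tau η * Real.log 2)) := by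
  classical
  -- the Jensen-averaged loss
  set G : Y → Y → ℝ := fun y₁ y₂ =>
    ∑ x, D y₁ x * ell (dot (φ x) (fun i => mu D φ y₁ i - mu D φ y₂ i)) with hG
  -- diagonal value
  have hGd : ∀ y, G y y = Real.log 2 := by
    intro y
    have h0 : ∀ x : X, dot (φ x) (fun i => mu D φ y i - mu D φ y i) = 0 := by
      intro x; simp [dot]
    simp only [hG, h0, ell_zero, ← Finset.sum_mul, hD1 y, one_mul]
  -- Jensen bound per pair
  have hG_le : ∀ y₁ y₂ : Y,
      G y₁ y₂ ≤ ∑ x, ∑ xp, ∑ xn, D y₁ x * D y₁ xp * D y₂ xn *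
        ell (dot (φ x) (fun i => φ xp i - φ xn i)) := by
    intro y₁ y₂
    apply Finset.sum_le_sum
    intro x _
    calc D y₁ x * ell (dot (φ x) (fun i => mu D φ y₁ i - mu D φ y₂ i))
        ≤ D y₁ x * ∑ xp, ∑ xn, D y₁ xp * D y₂ xn *
            ell (dot (φ x) (fun i => φ xp i - φ xn i)) :=
          mul_le_mul_of_nonneg_left (jensen_key D hD0 hD1 φ y₁ y₂ (φ x)) (hD0 _ _)
      _ = ∑ xp, ∑ xn, D y₁ x * D y₁ xp * D y₂ xn *
            ell (dot (φ x) (fun i => φ xp i - φ xn i)) := by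
          rw [Finset.mul_sum]
          apply Finset.sum_congr rfl; intro xp _
          rw [Finset.mul_sum]
          apply Finset.sum_congr rfl; intro xn _; ring
  have hG_le_Lcon : ∑ y₁, ∑ y₂, η y₁ * η y₂ * G y₁ y₂ ≤ Lcon η D φ := by
    unfold Lcon
    apply Finset.sum_le_sum; intro y₁ _
    apply Finset.sum_le_sum; intro y₂ _
    exact mul_le_mul_of_nonneg_left (hG_le y₁ y₂) (mul_nonneg (hη0 _) (hη0 _))
  -- diagonal split
  have hsplit : ∑ y₁, ∑ y₂, η y₁ * η y₂ * G y₁ y₂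
      = (∑ y₁, ∑ y₂, if y₁ ≠ y₂ then η y₁ * η y₂ * G y₁ y₂ else 0)
        + tau η * Real.log 2 := by
    have step : ∀ y₁ : Y, ∑ y₂, η y₁ * η y₂ * G y₁ y₂
        = (∑ y₂, if y₁ ≠ y₂ then η y₁ * η y₂ * G y₁ y₂ else 0)
          + η y₁ ^ 2 * G y₁ y₁ := by
      intro y₁
      have pt : ∀ y₂ : Y, η y₁ * η y₂ * G y₁ y₂
          = (if y₁ ≠ y₂ then η y₁ * η y₂ * G y₁ y₂ else 0)
            + (if y₁ = y₂ then η y₁ * η y₂ * G y₁ y₂ else 0) := by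
        intro y₂; by_cases h : y₁ = y₂ <;> simp [h]
      calc ∑ y₂, η y₁ * η y₂ * G y₁ y₂
          = (∑ y₂, if y₁ ≠ y₂ then η y₁ * η y₂ * G y₁ y₂ else 0)
            + ∑ y₂, if y₁ = y₂ then η y₁ * η y₂ * G y₁ y₂ else 0 := by
            rw [← Finset.sum_add_distrib]
            exact Finset.sum_congr rfl fun y₂ _ => pt y₂
        _ = (∑ y₂, if y₁ ≠ y₂ then η y₁ * η y₂ * G y₁ y₂ else 0)
            + η y₁ ^ 2 * G y₁ y₁ := by
            rw [Finset.sum_ite_eq Finset.univ y₁ (fun y₂ => η y₁ * η y₂ * G y₁ y₂)]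
            simp [sq]
    calc ∑ y₁, ∑ y₂, η y₁ * η y₂ * G y₁ y₂
        = (∑ y₁, ∑ y₂, if y₁ ≠ y₂ then η y₁ * η y₂ * G y₁ y₂ else 0)
          + ∑ y₁, η y₁ ^ 2 * G y₁ y₁ := by
          simp only [step, Finset.sum_add_distrib]
      _ = (∑ y₁, ∑ y₂, if y₁ ≠ y₂ then η y₁ * η y₂ * G y₁ y₂ else 0)
          + tau η * Real.log 2 := by
          congr 1
          simp only [hGd]
          rw [tau, ← Finset.sum_mul]
  -- Lsup bound
  have hsup : ∀ y₁ y₂ : Y, Lsup D y₁ y₂ φ ≤ (1/2) * (G y₁ y₂ + G y₂ y₁) := by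
    intro y₁ y₂
    have hbdd : BddBelow (Set.range fun w : Fin d → ℝ =>
        (1 / 2) * ((∑ x, D y₁ x * ell (dot w (φ x))) +
          ∑ x, D y₂ x * ell (-(dot w (φ x))))) := by
      refine ⟨0, fun r hr => ?_⟩
      obtain ⟨w, rfl⟩ := hr
      have h1 : (0:ℝ) ≤ ∑ x, D y₁ x * ell (dot w (φ x)) :=
        Finset.sum_nonneg fun x _ => mul_nonneg (hD0 _ _) (ell_nonneg _)
      have h2 : (0:ℝ) ≤ ∑ x, D y₂ x * ell (-(dot w (φ x))) :=
        Finset.sum_nonneg fun x _ => mul_nonneg (hD0 _ _) (ell_nonneg _)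
      dsimp only
      linarith
    refine le_trans (ciInf_le hbdd (fun i => mu D φ y₁ i - mu D φ y₂ i)) (le_of_eq ?_)
    congr 1
    congr 1
    · apply Finset.sum_congr rfl; intro x _
      rw [dot_comm]
    · apply Finset.sum_congr rfl; intro x _
      congr 1
      rw [dot_comm, dot_sub, dot_sub]
      ring
  -- symmetry of the swapped sum
  have hswap : ∑ y₁, ∑ y₂, (if y₁ ≠ y₂ then η y₁ * η y₂ * G y₂ y₁ else 0)
      = ∑ y₁, ∑ y₂, (if y₁ ≠ y₂ then η y₁ * η y₂ * G y₁ y₂ else 0) := by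
    rw [Finset.sum_comm]
    apply Finset.sum_congr rfl; intro y₁ _
    apply Finset.sum_congr rfl; intro y₂ _
    rcases eq_or_ne y₁ y₂ with h | h
    · subst h; simp
    · rw [if_pos h.symm, if_pos h]; ring
  have main : (∑ y₁, ∑ y₂, if y₁ ≠ y₂ then η y₁ * η y₂ * Lsup D y₁ y₂ φ else 0) ≤
      Lcon η D φ - tau η * Real.log 2 := by
    have step1 : (∑ y₁, ∑ y₂, if y₁ ≠ y₂ then η y₁ * η y₂ * Lsup D y₁ y₂ φ else 0)
        ≤ ∑ y₁, ∑ y₂, if y₁ ≠ y₂ then η y₁ * η y₂ * ((1/2) * (G y₁ y₂ + G y₂ y₁)) else 0 := by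
      apply Finset.sum_le_sum; intro y₁ _
      apply Finset.sum_le_sum; intro y₂ _
      rcases eq_or_ne y₁ y₂ with h | h
      · simp [h]
      · rw [if_pos h, if_pos h]
        exact mul_le_mul_of_nonneg_left (hsup y₁ y₂) (mul_nonneg (hη0 _) (hη0 _))
    have step2 : (∑ y₁, ∑ y₂, if y₁ ≠ y₂ then η y₁ * η y₂ * ((1/2) * (G y₁ y₂ + G y₂ y₁)) else 0)
        = ∑ y₁, ∑ y₂, if y₁ ≠ y₂ then η y₁ * η y₂ * G y₁ y₂ else 0 := by
      have expand : ∀ y₁ y₂ : Y,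
          (if y₁ ≠ y₂ then η y₁ * η y₂ * ((1/2) * (G y₁ y₂ + G y₂ y₁)) else 0)
          = (1/2) * ((if y₁ ≠ y₂ then η y₁ * η y₂ * G y₁ y₂ else 0)
              + (if y₁ ≠ y₂ then η y₁ * η y₂ * G y₂ y₁ else 0)) := by
        intro y₁ y₂
        rcases eq_or_ne y₁ y₂ with h | h
        · simp [h]
        · rw [if_pos h, if_pos h, if_pos h]; ring
      simp only [expand, ← Finset.mul_sum, Finset.sum_add_distrib]
      rw [hswap]
      ring
    have step3 : (∑ y₁, ∑ y₂, if y₁ ≠ y₂ then η y₁ * η y₂ * G y₁ y₂ else 0)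
        ≤ Lcon η D φ - tau η * Real.log 2 := by
      have := hG_le_Lcon
      rw [hsplit] at this
      linarith
    exact step1.trans (step2.le.trans step3)
  refine ⟨main, fun hτ => ?_⟩
  unfold LsupAvg
  apply mul_le_mul_of_nonneg_left main
  have : (0:ℝ) < 1 - tau η := by linarith
  positivity
end

section
/- Swap-and-average step in the proof of Lemma D.1: Let j ≠ j' be indices in {1,…,k} and assume ζ is invariant under simultaneously swapping coordinates j and j' of z and of z'. Then for every λ ∈ ℝ^k, the vector λ' defined by λ'_j = λ'_{j'} = sqrt((λ_j² + λ_{j'}²)/2) and λ'_i = λ_i for i ∉ {j, j'} satisfies F(λ') ≥ F(λ); moreover Σ_i (λ'_i)² = Σ_i λ_i². -/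
/-!
Replacing `λ` by `λ ∘ swap j j'` does not change `F`, because `ζ` is swap-invariant. The
averaged vector `λ'` has `λ'_i² = (λ_i² + λ_{swap i}²) / 2` for every `i`, and `F` is a
nonnegative combination of square roots of linear forms in the squares `λ_i²`, so by
concavity of `√·` we get `F(λ') ≥ (F(λ) + F(λ ∘ swap)) / 2 = F(λ)`.
-/

open scoped BigOperators

/-- Objective `F(λ) = Σ_{(z,z')} ζ(z,z')·√(Σ_i λ_i²·1[z_i ≠ z'_i])`, where points of
`{−1,+1}^k` are encoded as `Fin k → Bool`. -/
noncomputable def F {k : ℕ} (ζ : ((Fin k → Bool) × (Fin k → Bool)) → ℝ)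
    (lam : Fin k → ℝ) : ℝ :=
  ∑ p : (Fin k → Bool) × (Fin k → Bool),
    ζ p * Real.sqrt (∑ i, (lam i) ^ 2 * (if p.1 i ≠ p.2 i then 1 else 0))

open Finset

section SwapAverage

variable {ι : Type*} [DecidableEq ι]

noncomputable def swapAverage (j j' : ι) (lam : ι → ℝ) : ι → ℝ :=
  fun i => if i = j ∨ i = j' then Real.sqrt ((lam j ^ 2 + lam j' ^ 2) / 2) else lam i

lemma swapAverage_sq (j j' : ι) (lam : ι → ℝ) (i : ι) :
    swapAverage j j' lam i ^ 2 = (lam i ^ 2 + lam (Equiv.swap j j' i) ^ 2) / 2 := by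
  have hsq : Real.sqrt ((lam j ^ 2 + lam j' ^ 2) / 2) ^ 2 = (lam j ^ 2 + lam j' ^ 2) / 2 :=
    Real.sq_sqrt (by positivity)
  unfold swapAverage
  split_ifs with h
  · rcases h with rfl | rfl
    · rw [Equiv.swap_apply_left, hsq]
    · rw [Equiv.swap_apply_right, hsq, add_comm]
  · push Not at h
    rw [Equiv.swap_apply_of_ne_of_ne h.1 h.2]
    ring

lemma sum_swapAverage_sq [Fintype ι] (j j' : ι) (lam : ι → ℝ) :
    ∑ i, swapAverage j j' lam i ^ 2 = ∑ i, lam i ^ 2 := by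
  simp_rw [swapAverage_sq, ← sum_div, sum_add_distrib,
    Equiv.sum_comp (Equiv.swap j j') fun i => lam i ^ 2]
  ring

end SwapAverage

lemma add_sqrt_div_two_le_sqrt_add_div_two {a b : ℝ} (ha : 0 ≤ a) (hb : 0 ≤ b) :
    (Real.sqrt a + Real.sqrt b) / 2 ≤ Real.sqrt ((a + b) / 2) := by
  have h := Real.strictConcaveOn_sqrt.concaveOn.2 (Set.mem_Ici.2 ha) (Set.mem_Ici.2 hb)
    (by norm_num : (0 : ℝ) ≤ 1 / 2) (by norm_num : (0 : ℝ) ≤ 1 / 2) (by norm_num)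
  simp only [smul_eq_mul] at h
  calc (Real.sqrt a + Real.sqrt b) / 2 = 1 / 2 * Real.sqrt a + 1 / 2 * Real.sqrt b := by ring
    _ ≤ Real.sqrt (1 / 2 * a + 1 / 2 * b) := h
    _ = Real.sqrt ((a + b) / 2) := by congr 1; ring

section F

variable {k : ℕ} {ζ : ((Fin k → Bool) × (Fin k → Bool)) → ℝ}

lemma F_comp_perm (σ : Equiv.Perm (Fin k))
    (hσ : ∀ z z' : Fin k → Bool, ζ (z ∘ σ, z' ∘ σ) = ζ (z, z')) (lam : Fin k → ℝ) :
    F ζ (lam ∘ σ) = F ζ lam := by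
  -- `e p = (p.1 ∘ σ, p.2 ∘ σ)`
  let e := (σ.symm.arrowCongr (Equiv.refl Bool)).prodCongr (σ.symm.arrowCongr (Equiv.refl Bool))
  refine (Equiv.sum_comp e _).symm.trans (sum_congr rfl fun p _ => ?_)
  have hζ : ζ (e p) = ζ p := hσ p.1 p.2
  have hinner : ∑ i, (lam ∘ σ) i ^ 2 * (if (e p).1 i ≠ (e p).2 i then 1 else 0)
      = ∑ i, lam i ^ 2 * (if p.1 i ≠ p.2 i then 1 else 0) :=
    Equiv.sum_comp σ fun i => lam i ^ 2 * (if p.1 i ≠ p.2 i then 1 else 0)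
  rw [hζ, hinner]

lemma F_add_div_two_le (hζ : ∀ p, 0 ≤ ζ p) {lam nu mu : Fin k → ℝ}
    (hmu : ∀ i, mu i ^ 2 = (lam i ^ 2 + nu i ^ 2) / 2) :
    (F ζ lam + F ζ nu) / 2 ≤ F ζ mu := by
  unfold F
  rw [← sum_add_distrib, sum_div]
  refine sum_le_sum fun p _ => ?_
  have hmu_sum : ∑ i, mu i ^ 2 * (if p.1 i ≠ p.2 i then 1 else 0)
      = (∑ i, lam i ^ 2 * (if p.1 i ≠ p.2 i then 1 else 0)
        + ∑ i, nu i ^ 2 * (if p.1 i ≠ p.2 i then 1 else 0)) / 2 := by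
    simp_rw [hmu, ← sum_add_distrib, sum_div]
    exact sum_congr rfl fun i _ => by ring
  rw [← mul_add, mul_div_assoc, hmu_sum]
  exact mul_le_mul_of_nonneg_left (add_sqrt_div_two_le_sqrt_add_div_two
    (sum_nonneg fun i _ => by positivity) (sum_nonneg fun i _ => by positivity)) (hζ p)

end F

theorem swap_and_average_general
    (k : ℕ) (j j' : Fin k)
    (ζ : ((Fin k → Bool) × (Fin k → Bool)) → ℝ)
    (hζ0 : ∀ p, 0 ≤ ζ p)
    (hswap : ∀ z z' : Fin k → Bool,
      ζ (z ∘ Equiv.swap j j', z' ∘ Equiv.swap j j') = ζ (z, z'))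
    (lam : Fin k → ℝ) :
    F ζ lam ≤
        F ζ (fun i => if i = j ∨ i = j' then
          Real.sqrt (((lam j) ^ 2 + (lam j') ^ 2) / 2) else lam i) ∧
      (∑ i, (if i = j ∨ i = j' then
          Real.sqrt (((lam j) ^ 2 + (lam j') ^ 2) / 2) else lam i) ^ 2) =
        ∑ i, (lam i) ^ 2 := by
  refine ⟨?_, sum_swapAverage_sq j j' lam⟩
  calc F ζ lam = (F ζ lam + F ζ (lam ∘ Equiv.swap j j')) / 2 := by
        rw [F_comp_perm _ hswap]; ring
    _ ≤ F ζ (swapAverage j j' lam) := F_add_div_two_le hζ0 (swapAverage_sq j j' lam)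

/-- Swap-and-average step in the proof of Lemma D.1: averaging the squared
weights of two coordinates under which `ζ` is swap-invariant does not decrease
`F` and preserves the squared Euclidean norm. -/
theorem swap_and_average
    (k : ℕ) (j j' : Fin k) (hjj : j ≠ j')
    (ζ : ((Fin k → Bool) × (Fin k → Bool)) → ℝ)
    (hζ0 : ∀ p, 0 ≤ ζ p) (hζ1 : ∑ p, ζ p = 1)
    (hswap : ∀ z z' : Fin k → Bool,
      ζ (z ∘ Equiv.swap j j', z' ∘ Equiv.swap j j') = ζ (z, z'))
    (lam : Fin k → ℝ) :
    F ζ lam ≤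
        F ζ (fun i => if i = j ∨ i = j' then
          Real.sqrt (((lam j) ^ 2 + (lam j') ^ 2) / 2) else lam i) ∧
      (∑ i, (if i = j ∨ i = j' then
          Real.sqrt (((lam j) ^ 2 + (lam j') ^ 2) / 2) else lam i) ^ 2) =
        ∑ i, (lam i) ^ 2 :=
  swap_and_average_general k j j' ζ hζ0 hswap lam
end
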